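/- arXiv:2312.16729 — 3 statements merged into one kernel-verified Lean document; each statement's English description precedes it below -/
import Mathlib

section
/- Let c : X × X → [0,1] be a 1-bounded pseudometric (symmetric, zero on the diagonal, triangle inequality) that is lower semicontinuous on a Polish space X. Then the optimal transport cost W(c)(μ,ν) = inf over couplings γ of μ and ν of ∫ c dγ defines a 1-bounded pseudometric on the space of Borel probability measures on X. -/
open MeasureTheory Set ProbabilityTheory

lemma myIntegrable {Y : Type*} [MeasurableSpace Y] (μ : Measure Y) [IsProbabilityMeasure μ]
    {f : Y → ℝ} (hm : Measurable f) (h0 : ∀ y, 0 ≤ f y) (h1 : ∀ y, f y ≤ 1) :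
    Integrable f μ := by
  refine Integrable.mono' (integrable_const 1) hm.aestronglyMeasurable ?_
  filter_upwards with y
  rw [Real.norm_eq_abs, abs_of_nonneg (h0 y)]; exact h1 y

section auxlemmas
variable {α β γ : Type*} [MeasurableSpace α] [MeasurableSpace β] [MeasurableSpace γ]

lemma myMapA (ν : Measure α) [IsProbabilityMeasure ν]
    (κ : Kernel α β) (η : Kernel α γ) [IsMarkovKernel κ] [IsMarkovKernel η] :
    (ν ⊗ₘ (κ ×ₖ η)).map (fun q => (q.1, q.2.1)) = ν ⊗ₘ κ := by
  ext s hs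
  rw [Measure.map_apply (by fun_prop) hs,
    Measure.compProd_apply (hs.preimage (by fun_prop)), Measure.compProd_apply hs]
  refine lintegral_congr fun a => ?_
  have h : (Prod.mk a ⁻¹' ((fun q : α × β × γ => (q.1, q.2.1)) ⁻¹' s))
      = (Prod.mk a ⁻¹' s) ×ˢ univ := by ext p; simp
  rw [h, Kernel.prod_apply, Measure.prod_prod, measure_univ, mul_one]

lemma myMapB (ν : Measure α) [IsProbabilityMeasure ν]
    (κ : Kernel α β) (η : Kernel α γ) [IsMarkovKernel κ] [IsMarkovKernel η] :
    (ν ⊗ₘ (κ ×ₖ η)).map (fun q => (q.1, q.2.2)) = ν ⊗ₘ η := by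
  ext s hs
  rw [Measure.map_apply (by fun_prop) hs,
    Measure.compProd_apply (hs.preimage (by fun_prop)), Measure.compProd_apply hs]
  refine lintegral_congr fun a => ?_
  have h : (Prod.mk a ⁻¹' ((fun q : α × β × γ => (q.1, q.2.2)) ⁻¹' s))
      = univ ×ˢ (Prod.mk a ⁻¹' s) := by ext p; simp
  rw [h, Kernel.prod_apply, Measure.prod_prod, measure_univ, one_mul]

end auxlemmas

lemma myGlue {X : Type*} [TopologicalSpace X] [PolishSpace X] [MeasurableSpace X] [BorelSpace X]
    [Nonempty X]
    (c : X → X → ℝ)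
    (hm : Measurable fun p : X × X => c p.1 p.2)
    (hctri : ∀ x y z, c x z ≤ c x y + c y z)
    (hcbd : ∀ x y, c x y ∈ Icc (0 : ℝ) 1)
    (μ ν θ : Measure X) [IsProbabilityMeasure ν]
    (γ₁ γ₂ : Measure (X × X)) [IsProbabilityMeasure γ₁] [IsProbabilityMeasure γ₂]
    (h1f : γ₁.map Prod.fst = μ) (h1s : γ₁.map Prod.snd = ν)
    (h2f : γ₂.map Prod.fst = ν) (h2s : γ₂.map Prod.snd = θ) :
    ∃ γ : Measure (X × X), IsProbabilityMeasure γ ∧ γ.map Prod.fst = μ ∧ γ.map Prod.snd = θ ∧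
      ∫ p, c p.1 p.2 ∂γ ≤ ∫ p, c p.1 p.2 ∂γ₁ + ∫ p, c p.1 p.2 ∂γ₂ := by
  set ρ : Measure (X × X) := γ₁.map Prod.swap with hρ
  haveI : IsProbabilityMeasure ρ := Measure.isProbabilityMeasure_map measurable_swap.aemeasurable
  have hρfst : ρ.fst = ν := by
    show ρ.map Prod.fst = ν
    rw [hρ, Measure.map_map measurable_fst measurable_swap]
    exact h1s
  have h2fst : γ₂.fst = ν := h2f
  set κ₁ := ρ.condKernel with hκ₁
  set κ₂ := γ₂.condKernel with hκ₂
  set η : Measure (X × X × X) := ν ⊗ₘ (κ₁ ×ₖ κ₂) with hη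
  haveI : IsProbabilityMeasure η := by rw [hη]; infer_instance
  have hA : η.map (fun q => (q.1, q.2.1)) = ρ := by
    rw [hη, myMapA, hκ₁, ← hρfst]; exact ρ.disintegrate ρ.condKernel
  have hB : η.map (fun q => (q.1, q.2.2)) = γ₂ := by
    rw [hη, myMapB, hκ₂, ← h2fst]; exact γ₂.disintegrate γ₂.condKernel
  refine ⟨η.map (fun q => (q.2.1, q.2.2)), Measure.isProbabilityMeasure_map (by fun_prop), ?_, ?_, ?_⟩
  · rw [Measure.map_map measurable_fst (by fun_prop)]
    have e : (Prod.fst ∘ fun q : X × X × X => (q.2.1, q.2.2))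
        = Prod.snd ∘ (fun q : X × X × X => (q.1, q.2.1)) := rfl
    rw [e, ← Measure.map_map measurable_snd (by fun_prop), hA, hρ,
      Measure.map_map measurable_snd measurable_swap]
    exact h1f
  · rw [Measure.map_map measurable_snd (by fun_prop)]
    have e : (Prod.snd ∘ fun q : X × X × X => (q.2.1, q.2.2))
        = Prod.snd ∘ (fun q : X × X × X => (q.1, q.2.2)) := rfl
    rw [e, ← Measure.map_map measurable_snd (by fun_prop), hB]
    exact h2s
  · rw [integral_map (by fun_prop) hm.aestronglyMeasurable]
    have i1 : Integrable (fun q : X × X × X => c q.2.1 q.2.2) η :=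
      myIntegrable η (hm.comp (by fun_prop)) (fun q => (hcbd _ _).1) (fun q => (hcbd _ _).2)
    have i2 : Integrable (fun q : X × X × X => c q.2.1 q.1) η :=
      myIntegrable η (hm.comp (by fun_prop : Measurable fun q : X × X × X => (q.2.1, q.1)))
        (fun q => (hcbd _ _).1) (fun q => (hcbd _ _).2)
    have i3 : Integrable (fun q : X × X × X => c q.1 q.2.2) η :=
      myIntegrable η (hm.comp (by fun_prop : Measurable fun q : X × X × X => (q.1, q.2.2)))
        (fun q => (hcbd _ _).1) (fun q => (hcbd _ _).2)
    have key : ∫ q, c q.2.1 q.2.2 ∂η ≤ ∫ q, (c q.2.1 q.1 + c q.1 q.2.2) ∂η :=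
      integral_mono i1 (i2.add i3) fun q => hctri _ _ _
    rw [integral_add i2 i3] at key
    have e1 : ∫ q, c q.2.1 q.1 ∂η = ∫ p, c p.1 p.2 ∂γ₁ := by
      have hswap : Measurable fun p : X × X => c p.2 p.1 :=
        hm.comp (by fun_prop : Measurable fun p : X × X => (p.2, p.1))
      calc ∫ q, c q.2.1 q.1 ∂η
          = ∫ p, c p.2 p.1 ∂(η.map (fun q => (q.1, q.2.1))) := by
            rw [integral_map (by fun_prop) hswap.aestronglyMeasurable]
        _ = ∫ p, c p.2 p.1 ∂ρ := by rw [hA]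
        _ = ∫ p, c p.1 p.2 ∂γ₁ := by
            rw [hρ, integral_map measurable_swap.aemeasurable hswap.aestronglyMeasurable]
            rfl
    have e2 : ∫ q, c q.1 q.2.2 ∂η = ∫ p, c p.1 p.2 ∂γ₂ := by
      calc ∫ q, c q.1 q.2.2 ∂η
          = ∫ p, c p.1 p.2 ∂(η.map (fun q => (q.1, q.2.2))) := by
            rw [integral_map (by fun_prop) hm.aestronglyMeasurable]
        _ = ∫ p, c p.1 p.2 ∂γ₂ := by rw [hB]
    rw [e1, e2] at key
    exact key

theorem stmt_5 {X : Type*} [TopologicalSpace X] [PolishSpace X]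
    [MeasurableSpace X] [BorelSpace X]
    (c : X → X → ℝ)
    (hc0 : ∀ x, c x x = 0)
    (hcsymm : ∀ x y, c x y = c y x)
    (hctri : ∀ x y z, c x z ≤ c x y + c y z)
    (hcbd : ∀ x y, c x y ∈ Icc (0 : ℝ) 1)
    (hclsc : LowerSemicontinuous fun p : X × X => c p.1 p.2)
    (W : Measure X → Measure X → ℝ)
    (hW : ∀ μ ν, W μ ν = sInf {r : ℝ | ∃ γ : Measure (X × X),
      IsProbabilityMeasure γ ∧ γ.map Prod.fst = μ ∧ γ.map Prod.snd = ν ∧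
      r = ∫ p, c p.1 p.2 ∂γ}) :
    ∀ μ ν θ : Measure X, IsProbabilityMeasure μ → IsProbabilityMeasure ν →
      IsProbabilityMeasure θ →
      W μ ν = W ν μ ∧ W μ ν ≤ 1 ∧ 0 ≤ W μ ν ∧ W μ μ = 0 ∧
      W μ θ ≤ W μ ν + W ν θ := by
  intro μ ν θ hμ hν hθ
  haveI := hμ; haveI := hν; haveI := hθ
  haveI : Nonempty X := by
    by_contra h
    haveI : IsEmpty X := not_nonempty_iff.1 h
    have h1 : μ univ = 1 := measure_univ
    rw [Set.univ_eq_empty_iff.mpr this, measure_empty] at h1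
    exact zero_ne_one h1
  have hm : Measurable fun p : X × X => c p.1 p.2 := hclsc.measurable
  set S : Measure X → Measure X → Set ℝ := fun μ' ν' => {r : ℝ | ∃ γ : Measure (X × X),
      IsProbabilityMeasure γ ∧ γ.map Prod.fst = μ' ∧ γ.map Prod.snd = ν' ∧
      r = ∫ p, c p.1 p.2 ∂γ} with hS
  have hbdd : ∀ μ' ν' : Measure X, BddBelow (S μ' ν') := by
    intro μ' ν'
    refine ⟨0, ?_⟩
    rintro r ⟨γ, hγ, -, -, rfl⟩
    exact integral_nonneg fun p => (hcbd _ _).1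
  have hmem : ∀ (μ' ν' : Measure X), IsProbabilityMeasure μ' → IsProbabilityMeasure ν' →
      (∫ p, c p.1 p.2 ∂(μ'.prod ν')) ∈ S μ' ν' := by
    intro μ' ν' h1 h2
    haveI := h1; haveI := h2
    exact ⟨μ'.prod ν', inferInstance, by simp, by simp, rfl⟩
  have hnonneg : ∀ (μ' ν' : Measure X), IsProbabilityMeasure μ' → IsProbabilityMeasure ν' →
      0 ≤ W μ' ν' := by
    intro μ' ν' h1 h2
    rw [hW]
    refine le_csInf ⟨_, hmem μ' ν' h1 h2⟩ ?_
    rintro r ⟨γ, hγ, -, -, rfl⟩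
    exact integral_nonneg fun p => (hcbd _ _).1
  have hsubset : ∀ μ' ν' : Measure X, S μ' ν' ⊆ S ν' μ' := by
    rintro μ' ν' r ⟨γ, hγ, hf, hs, rfl⟩
    haveI := hγ
    refine ⟨γ.map Prod.swap, Measure.isProbabilityMeasure_map measurable_swap.aemeasurable, ?_, ?_, ?_⟩
    · rw [Measure.map_map measurable_fst measurable_swap]; exact hs
    · rw [Measure.map_map measurable_snd measurable_swap]; exact hf
    · rw [integral_map measurable_swap.aemeasurable hm.aestronglyMeasurable]
      exact integral_congr_ae (by filter_upwards with p using hcsymm p.1 p.2)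
  refine ⟨?_, ?_, hnonneg μ ν hμ hν, ?_, ?_⟩
  · rw [hW, hW]
    exact congrArg sInf (Set.Subset.antisymm (hsubset μ ν) (hsubset ν μ))
  · rw [hW]
    refine csInf_le_of_le (hbdd μ ν) (hmem μ ν hμ hν) ?_
    calc ∫ p, c p.1 p.2 ∂(μ.prod ν)
        ≤ ∫ _, (1 : ℝ) ∂(μ.prod ν) := by
          refine integral_mono
            (myIntegrable _ hm (fun p => (hcbd _ _).1) (fun p => (hcbd _ _).2))
            (integrable_const 1) (fun p => (hcbd _ _).2)
      _ = 1 := by simp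
  · refine le_antisymm ?_ (hnonneg μ μ hμ hμ)
    rw [hW]
    refine csInf_le (hbdd μ μ) ?_
    refine ⟨μ.map (fun x => (x, x)),
      Measure.isProbabilityMeasure_map (by fun_prop : Measurable fun x : X => (x, x)).aemeasurable,
      ?_, ?_, ?_⟩
    · rw [Measure.map_map measurable_fst (by fun_prop)]
      exact Measure.map_id
    · rw [Measure.map_map measurable_snd (by fun_prop)]
      exact Measure.map_id
    · rw [integral_map (by fun_prop : Measurable fun x : X => (x, x)).aemeasurable
        hm.aestronglyMeasurable]
      simp [hc0]
  · refine le_of_forall_pos_le_add fun ε hε => ?_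
    have h1 : sInf (S μ ν) < W μ ν + ε / 2 := by rw [← hW]; linarith
    have h2 : sInf (S ν θ) < W ν θ + ε / 2 := by rw [← hW]; linarith
    obtain ⟨r₁, hr₁S, hr₁⟩ := exists_lt_of_csInf_lt ⟨_, hmem μ ν hμ hν⟩ h1
    obtain ⟨r₂, hr₂S, hr₂⟩ := exists_lt_of_csInf_lt ⟨_, hmem ν θ hν hθ⟩ h2
    obtain ⟨γ₁, hγ₁, h1f, h1s, rfl⟩ := hr₁S
    obtain ⟨γ₂, hγ₂, h2f, h2s, rfl⟩ := hr₂S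
    haveI := hγ₁; haveI := hγ₂
    obtain ⟨γ, hγ, hgf, hgs, hint⟩ := myGlue c hm hctri hcbd μ ν θ γ₁ γ₂ h1f h1s h2f h2s
    have hWle : W μ θ ≤ ∫ p, c p.1 p.2 ∂γ := by
      rw [hW]
      exact csInf_le (hbdd μ θ) ⟨γ, hγ, hgf, hgs, rfl⟩
    linarith
end

section
/- Let E be a Polish space with metric Δ, m : E × E → [0,1] a continuous 1-bounded pseudometric, and 0 < c < 1. Then the discounted uniform pseudometric U_c(m)(ω,ω') = sup_t c^t m(ω(t),ω'(t)) is continuous on Ω × Ω, where Ω is the space of continuous trajectories [0,∞) → E with the uniform metric. -/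
open Set
open scoped NNReal

theorem stmt_11 {E : Type*} [MetricSpace E] [CompleteSpace E]
    [TopologicalSpace.SeparableSpace E]
    (hΔ : ∀ x y : E, dist x y ≤ 1)
    (m : E → E → ℝ)
    (hm0 : ∀ x, m x x = 0)
    (hmsymm : ∀ x y, m x y = m y x)
    (hmtri : ∀ x y z, m x z ≤ m x y + m y z)
    (hmbd : ∀ x y, m x y ∈ Icc (0 : ℝ) 1)
    (hmcont : Continuous fun p : E × E => m p.1 p.2)
    (c : ℝ) (hc0 : 0 < c) (hc1 : c < 1)
    (U : BoundedContinuousFunction ℝ≥0 E → BoundedContinuousFunction ℝ≥0 E → ℝ)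
    (hU : ∀ ω ω', U ω ω' = ⨆ t : ℝ≥0, c ^ (t : ℝ) * m (ω t) (ω' t)) :
    Continuous fun p :
      BoundedContinuousFunction ℝ≥0 E × BoundedContinuousFunction ℝ≥0 E =>
      U p.1 p.2 := by
  
  -- powers of c are in (0,1]
  have hcpow_pos : ∀ t : ℝ≥0, 0 < c ^ (t : ℝ) := fun t => Real.rpow_pos_of_pos hc0 _
  have hcpow_le : ∀ t : ℝ≥0, c ^ (t : ℝ) ≤ 1 := fun t =>
    Real.rpow_le_one hc0.le hc1.le t.coe_nonneg
  -- the auxiliary sup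
  set S : BoundedContinuousFunction ℝ≥0 E → BoundedContinuousFunction ℝ≥0 E → ℝ := fun ω ν => ⨆ t : ℝ≥0, c ^ (t : ℝ) * m (ω t) (ν t) with hSdef
  have hterm_le_one : ∀ (ω ν : BoundedContinuousFunction ℝ≥0 E) (t : ℝ≥0), c ^ (t : ℝ) * m (ω t) (ν t) ≤ 1 := by
    intro ω ν t
    have h1 := (hmbd (ω t) (ν t)).1
    have h2 := (hmbd (ω t) (ν t)).2
    nlinarith [hcpow_pos t, hcpow_le t]
  have hbdd : ∀ ω ν : BoundedContinuousFunction ℝ≥0 E, BddAbove (Set.range fun t : ℝ≥0 => c ^ (t : ℝ) * m (ω t) (ν t)) := by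
    intro ω ν
    exact ⟨1, by rintro x ⟨t, rfl⟩; exact hterm_le_one ω ν t⟩
  have hSsymm : ∀ ω ν : BoundedContinuousFunction ℝ≥0 E, S ω ν = S ν ω := by
    intro ω ν
    simp only [hSdef]
    congr 1
    ext t
    rw [hmsymm]
  -- triangle-type inequality
  have htri : ∀ ω ω' ν ν' : BoundedContinuousFunction ℝ≥0 E, U ν ν' ≤ U ω ω' + (S ω ν + S ω' ν') := by
    intro ω ω' ν ν'
    rw [hU, hU]
    refine ciSup_le fun t => ?_
    have h1 : m (ν t) (ν' t) ≤ m (ω t) (ω' t) + m (ω t) (ν t) + m (ω' t) (ν' t) := by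
      have a1 := hmtri (ν t) (ω t) (ν' t)
      have a2 := hmtri (ω t) (ω' t) (ν' t)
      have a3 := hmsymm (ν t) (ω t)
      linarith
    have hc := hcpow_pos t
    have h2 : c ^ (t : ℝ) * m (ν t) (ν' t) ≤
        c ^ (t : ℝ) * m (ω t) (ω' t) + c ^ (t : ℝ) * m (ω t) (ν t)
          + c ^ (t : ℝ) * m (ω' t) (ν' t) := by nlinarith
    have b1 : c ^ (t : ℝ) * m (ω t) (ω' t) ≤ ⨆ s : ℝ≥0, c ^ (s : ℝ) * m (ω s) (ω' s) :=
      le_ciSup (hbdd ω ω') t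
    have b2 : c ^ (t : ℝ) * m (ω t) (ν t) ≤ S ω ν := le_ciSup (hbdd ω ν) t
    have b3 : c ^ (t : ℝ) * m (ω' t) (ν' t) ≤ S ω' ν' := le_ciSup (hbdd ω' ν') t
    linarith
  have habs : ∀ ω ω' ν ν' : BoundedContinuousFunction ℝ≥0 E, |U ν ν' - U ω ω'| ≤ S ω ν + S ω' ν' := by
    intro ω ω' ν ν'
    rw [abs_sub_le_iff]
    constructor
    · linarith [htri ω ω' ν ν']
    · have := htri ν ν' ω ω'
      rw [hSsymm ν ω, hSsymm ν' ω'] at this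
      linarith
  -- smallness of S for nearby trajectories
  have hsmall : ∀ (ω : BoundedContinuousFunction ℝ≥0 E) (ε : ℝ), 0 < ε → ∃ δ > 0, ∀ ν : BoundedContinuousFunction ℝ≥0 E, dist ω ν < δ → S ω ν ≤ ε := by
    intro ω ε hε
    obtain ⟨n, hn⟩ := exists_pow_lt_of_lt_one hε hc1
    set T : ℝ≥0 := (n : ℝ≥0)
    have hK : IsCompact (ω '' Icc 0 T) := (isCompact_Icc).image ω.continuous
    have hK' : IsCompact ((fun x : E => (x, x)) '' (ω '' Icc 0 T)) :=
      hK.image (continuous_id.prodMk continuous_id)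
    have hVopen : IsOpen {p : E × E | m p.1 p.2 < ε} :=
      isOpen_lt hmcont continuous_const
    have hsub : ((fun x : E => (x, x)) '' (ω '' Icc 0 T)) ⊆ {p : E × E | m p.1 p.2 < ε} := by
      rintro _ ⟨x, -, rfl⟩
      simp only [mem_setOf_eq, hm0]
      exact hε
    obtain ⟨δ, hδ0, hδ⟩ := hK'.exists_thickening_subset_open hVopen hsub
    refine ⟨δ, hδ0, fun ν hν => ?_⟩
    refine ciSup_le fun t => ?_
    by_cases ht : t ≤ T
    · -- small times: use compactness
      have hmem : (ω t, ν t) ∈ Metric.thickening δ ((fun x : E => (x, x)) '' (ω '' Icc 0 T)) := by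
        rw [Metric.mem_thickening_iff]
        refine ⟨(ω t, ω t), ⟨ω t, ⟨t, ⟨zero_le, ht⟩, rfl⟩, rfl⟩, ?_⟩
        rw [Prod.dist_eq]
        simp only [dist_self]
        have : dist (ν t) (ω t) ≤ dist ν ω := BoundedContinuousFunction.dist_coe_le_dist t
        rw [dist_comm ν ω] at this
        exact max_lt hδ0 (lt_of_le_of_lt this hν)
      have hmε : m (ω t) (ν t) < ε := hδ hmem
      have h0 := (hmbd (ω t) (ν t)).1
      nlinarith [hcpow_pos t, hcpow_le t]
    · -- large times: discount factor is small
      push_neg at ht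
      have htc : (n : ℝ) ≤ (t : ℝ) := by
        have : T ≤ t := ht.le
        exact_mod_cast this
      have hpow : c ^ (t : ℝ) ≤ c ^ (n : ℝ) :=
        Real.rpow_le_rpow_of_exponent_ge hc0 hc1.le htc
      have hpn : c ^ (n : ℝ) = c ^ n := by
        rw [Real.rpow_natCast]
      have hmle := (hmbd (ω t) (ν t)).2
      have h0 := (hmbd (ω t) (ν t)).1
      have : c ^ (t : ℝ) * m (ω t) (ν t) ≤ c ^ (t : ℝ) := by
        nlinarith [hcpow_pos t]
      calc c ^ (t : ℝ) * m (ω t) (ν t) ≤ c ^ (t : ℝ) := this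
        _ ≤ c ^ (n : ℝ) := hpow
        _ = c ^ n := hpn
        _ ≤ ε := hn.le
  -- conclude continuity
  rw [Metric.continuous_iff]
  intro p ε hε
  obtain ⟨δ1, hδ1, h1⟩ := hsmall p.1 (ε / 3) (by linarith)
  obtain ⟨δ2, hδ2, h2⟩ := hsmall p.2 (ε / 3) (by linarith)
  refine ⟨min δ1 δ2, lt_min hδ1 hδ2, fun q hq => ?_⟩
  rw [Prod.dist_eq] at hq
  have hq1 : dist p.1 q.1 < δ1 := by
    rw [dist_comm]
    exact lt_of_le_of_lt (le_max_left _ _) (lt_of_lt_of_le hq (min_le_left _ _))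
  have hq2 : dist p.2 q.2 < δ2 := by
    rw [dist_comm]
    exact lt_of_le_of_lt (le_max_right _ _) (lt_of_lt_of_le hq (min_le_right _ _))
  have := habs p.1 p.2 q.1 q.2
  have s1 := h1 q.1 hq1
  have s2 := h2 q.2 hq2
  rw [Real.dist_eq]
  calc |U q.1 q.2 - U p.1 p.2| ≤ S p.1 q.1 + S p.2 q.2 := this
    _ ≤ ε / 3 + ε / 3 := add_le_add s1 s2
    _ < ε := by linarith
end

section
/- Suppose m is a lower semicontinuous 1-bounded pseudometric on E that is a fixpoint of F_c and satisfies m(x,y) ≥ |obs(x)−obs(y)| for all x,y. Then m ≥ δ̄^c pointwise, i.e. δ̄^c is the least such fixpoint. -/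
open MeasureTheory Set
open scoped NNReal

theorem stmt_17 {E : Type*} [TopologicalSpace E] [PolishSpace E]
    [MeasurableSpace E] [BorelSpace E]
    (P : ℝ≥0 → E → ProbabilityMeasure E)
    (hPcont : ∀ t, Continuous (P t))
    (hP0 : ∀ x, (P 0 x).toMeasure = Measure.dirac x)
    (obs : E → ℝ) (hobs : Continuous obs) (hobs01 : ∀ x, obs x ∈ Icc (0 : ℝ) 1)
    (c : ℝ) (hc0 : 0 < c) (hc1 : c < 1)
    (W : (E → E → ℝ) → Measure E → Measure E → ℝ)
    (hW : ∀ m μ ν, W m μ ν = sInf {r : ℝ | ∃ γ : Measure (E × E),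
      IsProbabilityMeasure γ ∧ γ.map Prod.fst = μ ∧ γ.map Prod.snd = ν ∧
      r = ∫ p, m p.1 p.2 ∂γ})
    (Fc : (E → E → ℝ) → E → E → ℝ)
    (hFc : ∀ m x y, Fc m x y =
      ⨆ t : ℝ≥0, c ^ (t : ℝ) * W m (P t x).toMeasure (P t y).toMeasure)
    (δ : ℕ → E → E → ℝ)
    (hδ0 : ∀ x y, δ 0 x y = |obs x - obs y|)
    (hδs : ∀ n, δ (n + 1) = Fc (δ n))
    (δbar : E → E → ℝ)
    (hδbar : ∀ x y, δbar x y = ⨆ n, δ n x y)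
    (m : E → E → ℝ)
    (hm0 : ∀ x, m x x = 0)
    (hmsymm : ∀ x y, m x y = m y x)
    (hmtri : ∀ x y z, m x z ≤ m x y + m y z)
    (hmbd : ∀ x y, m x y ∈ Icc (0 : ℝ) 1)
    (hmlsc : LowerSemicontinuous fun p : E × E => m p.1 p.2)
    (hfix : ∀ x y, Fc m x y = m x y)
    (hge : ∀ x y, |obs x - obs y| ≤ m x y) :
    ∀ x y, δbar x y ≤ m x y := by
  have hm_meas : Measurable fun p : E × E => m p.1 p.2 := hmlsc.measurable
  -- m is integrable wrt any probability measure on E × E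
  have hm_int : ∀ γ : Measure (E × E), IsProbabilityMeasure γ →
      Integrable (fun p : E × E => m p.1 p.2) γ := by
    intro γ hγ
    haveI := hγ
    refine ⟨hm_meas.aestronglyMeasurable, ?_⟩
    apply HasFiniteIntegral.of_bounded (C := 1)
    filter_upwards with p
    rw [Real.norm_eq_abs, abs_of_nonneg (hmbd p.1 p.2).1]
    exact (hmbd p.1 p.2).2
  have hm_int_le_one : ∀ γ : Measure (E × E), IsProbabilityMeasure γ →
      (∫ p, m p.1 p.2 ∂γ) ≤ 1 := by
    intro γ hγ
    haveI := hγ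
    calc (∫ p, m p.1 p.2 ∂γ) ≤ ∫ _, (1 : ℝ) ∂γ :=
          integral_mono (hm_int γ hγ) (integrable_const 1) (fun p => (hmbd p.1 p.2).2)
      _ = 1 := by simp
  -- W m is between 0 and 1 for probability measures
  have hWm_nonneg : ∀ g : E → E → ℝ, (∀ x y, 0 ≤ g x y) → ∀ μ ν, 0 ≤ W g μ ν := by
    intro g hg μ ν
    rw [hW]
    apply Real.sInf_nonneg
    rintro r ⟨γ, hγ, -, -, rfl⟩
    exact integral_nonneg fun p => hg p.1 p.2
  have hWm_le_one : ∀ μ ν : Measure E, IsProbabilityMeasure μ → IsProbabilityMeasure ν →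
      W m μ ν ≤ 1 := by
    intro μ ν hμ hν
    haveI := hμ; haveI := hν
    rw [hW]
    have hmem : (∫ p, m p.1 p.2 ∂(μ.prod ν)) ∈ {r : ℝ | ∃ γ : Measure (E × E),
        IsProbabilityMeasure γ ∧ γ.map Prod.fst = μ ∧ γ.map Prod.snd = ν ∧
        r = ∫ p, m p.1 p.2 ∂γ} := by
      refine ⟨μ.prod ν, inferInstance, ?_, ?_, rfl⟩
      · simp [Measure.map_fst_prod]
      · simp [Measure.map_snd_prod]
    have hbdd : BddBelow {r : ℝ | ∃ γ : Measure (E × E),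
        IsProbabilityMeasure γ ∧ γ.map Prod.fst = μ ∧ γ.map Prod.snd = ν ∧
        r = ∫ p, m p.1 p.2 ∂γ} := by
      refine ⟨0, ?_⟩
      rintro r ⟨γ, hγ, -, -, rfl⟩
      exact integral_nonneg fun p => (hmbd p.1 p.2).1
    exact le_trans (csInf_le hbdd hmem) (hm_int_le_one _ inferInstance)
  -- monotonicity of W
  have hWmono : ∀ g : E → E → ℝ, (∀ x y, 0 ≤ g x y) → (∀ x y, g x y ≤ m x y) →
      ∀ μ ν : Measure E, IsProbabilityMeasure μ → IsProbabilityMeasure ν →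
      W g μ ν ≤ W m μ ν := by
    intro g hg0 hgm μ ν hμ hν
    haveI := hμ; haveI := hν
    rw [hW, hW]
    apply le_csInf
    · exact ⟨∫ p, m p.1 p.2 ∂(μ.prod ν), μ.prod ν, inferInstance,
        by simp [Measure.map_fst_prod], by simp [Measure.map_snd_prod], rfl⟩
    · rintro r ⟨γ, hγ, hf, hs, rfl⟩
      have hbdd : BddBelow {r : ℝ | ∃ γ : Measure (E × E),
          IsProbabilityMeasure γ ∧ γ.map Prod.fst = μ ∧ γ.map Prod.snd = ν ∧
          r = ∫ p, g p.1 p.2 ∂γ} := by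
        refine ⟨0, ?_⟩
        rintro r ⟨γ', hγ', -, -, rfl⟩
        exact integral_nonneg fun p => hg0 p.1 p.2
      have hmem : (∫ p, g p.1 p.2 ∂γ) ∈ {r : ℝ | ∃ γ' : Measure (E × E),
          IsProbabilityMeasure γ' ∧ γ'.map Prod.fst = μ ∧ γ'.map Prod.snd = ν ∧
          r = ∫ p, g p.1 p.2 ∂γ'} := ⟨γ, hγ, hf, hs, rfl⟩
      refine le_trans (csInf_le hbdd hmem) ?_
      by_cases hint : Integrable (fun p : E × E => g p.1 p.2) γ
      · exact integral_mono hint (hm_int γ hγ) fun p => hgm p.1 p.2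
      · rw [integral_undef hint]
        exact integral_nonneg fun p => (hmbd p.1 p.2).1
  have hcpow_nonneg : ∀ t : ℝ≥0, (0 : ℝ) ≤ c ^ (t : ℝ) := fun t => Real.rpow_nonneg hc0.le _
  have hcpow_le_one : ∀ t : ℝ≥0, c ^ (t : ℝ) ≤ 1 := fun t =>
    Real.rpow_le_one hc0.le hc1.le t.coe_nonneg
  -- main induction
  have key : ∀ n, (∀ x y, 0 ≤ δ n x y) ∧ (∀ x y, δ n x y ≤ m x y) := by
    intro n
    induction n with
    | zero =>
      constructor
      · intro x y; rw [hδ0]; exact abs_nonneg _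
      · intro x y; rw [hδ0]; exact hge x y
    | succ n ih =>
      obtain ⟨h0, hle⟩ := ih
      have hδn1 : ∀ x y, δ (n + 1) x y =
          ⨆ t : ℝ≥0, c ^ (t : ℝ) * W (δ n) (P t x).toMeasure (P t y).toMeasure := by
        intro x y; rw [hδs n, hFc]
      constructor
      · intro x y
        rw [hδn1]
        apply Real.iSup_nonneg
        intro t
        exact mul_nonneg (hcpow_nonneg t) (hWm_nonneg _ h0 _ _)
      · intro x y
        rw [hδn1]
        apply Real.iSup_le _ (hmbd x y).1
        intro t
        have h1 : c ^ (t : ℝ) * W (δ n) (P t x).toMeasure (P t y).toMeasure ≤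
            c ^ (t : ℝ) * W m (P t x).toMeasure (P t y).toMeasure :=
          mul_le_mul_of_nonneg_left
            (hWmono _ h0 hle _ _ inferInstance inferInstance) (hcpow_nonneg t)
        have hbdd : BddAbove (Set.range fun t : ℝ≥0 =>
            c ^ (t : ℝ) * W m (P t x).toMeasure (P t y).toMeasure) := by
          refine ⟨1, ?_⟩
          rintro r ⟨s, rfl⟩
          calc c ^ (s : ℝ) * W m (P s x).toMeasure (P s y).toMeasure
              ≤ 1 * 1 := mul_le_mul (hcpow_le_one s)
                (hWm_le_one _ _ inferInstance inferInstance)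
                (hWm_nonneg m (fun a b => (hmbd a b).1) _ _) zero_le_one
            _ = 1 := by ring
        have h2 : c ^ (t : ℝ) * W m (P t x).toMeasure (P t y).toMeasure ≤
            Fc m x y := by
          rw [hFc]
          exact le_ciSup hbdd t
        calc c ^ (t : ℝ) * W (δ n) (P t x).toMeasure (P t y).toMeasure
            ≤ c ^ (t : ℝ) * W m (P t x).toMeasure (P t y).toMeasure := h1
          _ ≤ Fc m x y := h2
          _ = m x y := hfix x y
  intro x y
  rw [hδbar]
  exact Real.iSup_le (fun n => (key n).2 x y) (hmbd x y).1
end
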